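/- arXiv:1811.06708 — 5 statements merged into one kernel-verified Lean document; each statement's English description precedes it below -/
import Mathlib

section
/- Let f : H → ℝ be continuous and quasiconvex on a real Hilbert space H, let X⋆ be its set of minimizers over a feasible set with minimum value f⋆, and let x ∈ H satisfy f⋆ < f(x). Suppose f satisfies the Hölder condition with degree β > 0 and constant L at some x⋆ ∈ X⋆ on the closure of the strict sublevel set lev_{<f(x)} f (i.e., |f(z) − f(x⋆)| ≤ L‖z − x⋆‖^β for all z in that closure). Then for every unit vector g in the normal-cone subdifferential ∂⋆f(x) := {g ∈ H : ⟨g, y − x⟩ ≤ 0 for all y with f(y) < f(x)}, one has f(x) − f⋆ ≤ L⟨g, x − x⋆⟩^β. -/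
/-!
Move from the minimizer `x⋆` along the unit normal `g`. As long as the ray `x⋆ + s • g` stays in
`{f < f x}`, the normal-cone inequality forces `s ≤ ⟪g, x - x⋆⟫`; by continuity the ray leaves this
set for the first time at some `0 < t ≤ ⟪g, x - x⋆⟫`, at a point `z` of its closure with
`f x ≤ f z` and `‖z - x⋆‖ = t`. The Hölder condition at `z` then gives
`f x - f⋆ ≤ f z - f⋆ ≤ L t ^ β ≤ L ⟪g, x - x⋆⟫ ^ β`.
-/

open Set Filter Topology

lemma exists_first_le_of_lt_of_le {φ : ℝ → ℝ} (hφ : Continuous φ) {c b : ℝ}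
    (h0 : φ 0 < c) (hb : 0 ≤ b) (hcb : c ≤ φ b) :
    ∃ t, 0 < t ∧ c ≤ φ t ∧ ∀ s ∈ Ico 0 t, φ s < c := by
  have hK : IsCompact (Icc 0 b ∩ {s | c ≤ φ s}) :=
    isCompact_Icc.inter_right (isClosed_le continuous_const hφ)
  obtain ⟨t, ⟨⟨ht0, htb⟩, hct⟩, hleast⟩ := hK.exists_isLeast ⟨b, ⟨hb, le_rfl⟩, hcb⟩
  refine ⟨t, ht0.lt_of_ne ?_, hct, fun s ⟨hs0, hst⟩ => ?_⟩
  · rintro rfl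
    exact h0.not_ge hct
  · by_contra! hcs
    exact hst.not_ge (hleast ⟨⟨hs0, hst.le.trans htb⟩, hcs⟩)

lemma mem_closure_of_mapsTo_Ioo {X : Type*} [TopologicalSpace X] {γ : ℝ → X} {U : Set X}
    {a t : ℝ} (hγ : ContinuousWithinAt γ (Iio t) t) (hat : a < t) (hU : MapsTo γ (Ioo a t) U) :
    γ t ∈ closure U :=
  mem_closure_of_tendsto hγ (eventually_of_mem (Ioo_mem_nhdsLT hat) hU)

theorem stmt_1_general {H : Type*} [NormedAddCommGroup H] [InnerProductSpace ℝ H]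
    (f : H → ℝ) (hcont : Continuous f)
    (fstar : ℝ) (xstar : H) (hfs : f xstar = fstar)
    (x : H) (hlt : fstar < f x)
    (β L : ℝ) (hβ : 0 < β)
    (hhold : ∀ z ∈ closure {w : H | f w < f x}, |f z - f xstar| ≤ L * ‖z - xstar‖ ^ β)
    (g : H) (hg : ∀ y : H, f y < f x → (inner ℝ g (y - x) : ℝ) ≤ 0) (hgnorm : ‖g‖ = 1) :
    f x - fstar ≤ L * (inner ℝ g (x - xstar) : ℝ) ^ β := by
  set d : ℝ := inner ℝ g (x - xstar)
  have hray : ∀ s : ℝ, f (xstar + s • g) < f x → s ≤ d := by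
    intro s hs
    have := hg _ hs
    rw [show xstar + s • g - x = s • g - (x - xstar) by abel, inner_sub_right,
      real_inner_smul_right, real_inner_self_eq_norm_sq, hgnorm] at this
    linarith
  have hd : 0 ≤ d := hray 0 (by simpa [hfs] using hlt)
  have hφ : Continuous fun s : ℝ => f (xstar + s • g) := by fun_prop
  obtain ⟨t, ht0, hft, hfirst⟩ := exists_first_le_of_lt_of_le hφ (by simpa [hfs] using hlt)
    (by linarith : 0 ≤ d + 1) (not_lt.mp fun h => by linarith [hray _ h])
  have htd : t ≤ d := by
    by_contra! hdt
    linarith [hray _ (hfirst ((d + t) / 2) ⟨by linarith, by linarith⟩)]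
  have hz : xstar + t • g ∈ closure {w : H | f w < f x} :=
    mem_closure_of_mapsTo_Ioo (γ := fun s : ℝ => xstar + s • g) (by fun_prop) ht0
      fun s hs => hfirst s (Ioo_subset_Ico_self hs)
  have hholdz := hhold _ hz
  rw [add_sub_cancel_left, norm_smul, hgnorm, mul_one, Real.norm_of_nonneg ht0.le, hfs,
    abs_of_pos (by linarith)] at hholdz
  have hL : 0 < L :=
    (mul_pos_iff_of_pos_right (Real.rpow_pos_of_pos ht0 β)).mp (by linarith)
  calc f x - fstar ≤ L * t ^ β := by linarith
    _ ≤ L * d ^ β := by gcongr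

/-- Proposition 2.4 (Konnov): relating the function value gap to the inner product
with a unit normal-cone subgradient, under a Hölder condition. -/
theorem stmt_1 {H : Type*} [NormedAddCommGroup H] [InnerProductSpace ℝ H]
    (f : H → ℝ) (hcont : Continuous f)
    (hqc : ∀ u v : H, ∀ α : ℝ, α ∈ Set.Icc (0:ℝ) 1 →
      f ((1 - α) • u + α • v) ≤ max (f u) (f v))
    (fstar : ℝ) (xstar : H) (hfs : f xstar = fstar)
    (x : H) (hlt : fstar < f x)
    (β L : ℝ) (hβ : 0 < β)
    (hhold : ∀ z ∈ closure {w : H | f w < f x}, |f z - f xstar| ≤ L * ‖z - xstar‖ ^ β)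
    (g : H) (hg : ∀ y : H, f y < f x → (inner ℝ g (y - x) : ℝ) ≤ 0) (hgnorm : ‖g‖ = 1) :
    f x - fstar ≤ L * (inner ℝ g (x - xstar) : ℝ) ^ β :=
  stmt_1_general f hcont fstar xstar hfs x hlt β L hβ hhold g hg hgnorm
end

section
/- Let H be a real Hilbert space, f continuous quasiconvex, x⋆ a minimizer with value f⋆, T : H → H nonexpansive with T(x⋆) = x⋆, P_D the metric projection onto a closed convex set D containing x⋆, α_k ∈ (0,1], v_k > 0, g_k a unit vector in the normal-cone subdifferential ∂⋆f(x_k), and x_{k+1} := P_D(α_k x_k + (1 − α_k) T(x_k − v_k g_k)). If f satisfies the Hölder condition with degree β > 0 and constant L at x⋆ on cl(lev_{<f(x_k)} f) and f⋆ < f(x_k), then ‖x_{k+1} − x⋆‖² ≤ ‖x_k − x⋆‖² − 2 v_k (1 − α_k) ((f(x_k) − f⋆)/L)^{1/β} + (1 − α_k) v_k². -/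
/-!
Continuity and the Hölder bound make the open ball `B(x⋆, r)`, `r = ((f x_k - f⋆) / L) ^ (1 / β)`,
a subset of the strict sublevel set `{f < f x_k}`: inside the ball that set is open and contains
its limit points, and the ball is connected. The half-space `⟪g_k, · - x_k⟫ ≤ 0` therefore
contains `B(x⋆, r)`, whence `⟪g_k, x_k - x⋆⟫ ≥ r`. The rest is the usual estimate: neither the
projection nor `T` increases the distance to `x⋆`, and `‖·‖²` is convex.
-/

open Metric
open scoped RealInnerProductSpace

theorem ball_subset_sublevel_of_holder {E : Type*} [NormedAddCommGroup E] [NormedSpace ℝ E]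
    {f : E → ℝ} (hf : Continuous f) {x₀ : E} {c L β r : ℝ} (hβ : 0 < β) (hL : 0 < L)
    (hr : L * r ^ β ≤ c - f x₀)
    (hhold : ∀ z ∈ closure {w | f w < c}, |f z - f x₀| ≤ L * ‖z - x₀‖ ^ β) :
    ball x₀ r ⊆ {w | f w < c} := by
  rcases le_or_gt r 0 with hr₀ | hr₀
  · simp [ball_eq_empty.2 hr₀]
  have hlt : ∀ z ∈ ball x₀ r, L * ‖z - x₀‖ ^ β < c - f x₀ := fun z hz =>
    (mul_lt_mul_of_pos_left
      (Real.rpow_lt_rpow (norm_nonneg _) (mem_ball_iff_norm.1 hz) hβ) hL).trans_le hr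
  refine (convex_ball x₀ r).isPreconnected.subset_of_closure_inter_subset
    (isOpen_lt hf continuous_const) ⟨x₀, mem_ball_self hr₀, ?_⟩ ?_
  · have := mul_pos hL (Real.rpow_pos_of_pos hr₀ β)
    show f x₀ < c
    linarith
  · rintro z ⟨hzcl, hz⟩
    have := (le_abs_self _).trans_lt ((hhold z hzcl).trans_lt (hlt z hz))
    show f z < c
    linarith

theorem le_inner_sub_of_ball_subset {F : Type*} [NormedAddCommGroup F] [InnerProductSpace ℝ F]
    {g x x₀ : F} {r : ℝ} (hg : ‖g‖ = 1) (hr : 0 < r)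
    (hball : ∀ y ∈ ball x₀ r, ⟪g, y - x⟫ ≤ 0) : r ≤ ⟪g, x - x₀⟫ := by
  refine le_of_forall_lt_imp_le_of_dense fun s hs => ?_
  set t := max s 0
  have ht : x₀ + t • g ∈ ball x₀ r := by
    rw [mem_ball_iff_norm, add_sub_cancel_left, norm_smul, hg, mul_one, Real.norm_eq_abs,
      abs_of_nonneg (le_max_right s 0)]
    exact max_lt hs hr
  have := hball _ ht
  rw [show x₀ + t • g - x = t • g - (x - x₀) by abel, inner_sub_right, real_inner_smul_right,
    real_inner_self_eq_norm_sq, hg] at this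
  linarith [le_max_left s 0]

theorem norm_sub_le_of_isNearest {F : Type*} [NormedAddCommGroup F] [InnerProductSpace ℝ F]
    {K : Set F} (hK : Convex ℝ K) {u p y : F} (hp : p ∈ K)
    (hmin : ∀ w ∈ K, ‖u - p‖ ≤ ‖u - w‖) (hy : y ∈ K) : ‖p - y‖ ≤ ‖u - y‖ := by
  have : Nonempty K := ⟨⟨p, hp⟩⟩
  have hinf : ‖u - p‖ = ⨅ w : K, ‖u - w‖ :=
    le_antisymm (le_ciInf fun w => hmin w w.2)
      (ciInf_le (f := fun w : K => ‖u - w‖) ⟨0, Set.forall_mem_range.2 fun _ => norm_nonneg _⟩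
        ⟨p, hp⟩)
  have hobtuse : ⟪u - p, y - p⟫ ≤ 0 := (norm_eq_iInf_iff_real_inner_le_zero hK hp).1 hinf y hy
  have hsq : ‖u - y‖ ^ 2 = ‖u - p‖ ^ 2 - 2 * ⟪u - p, y - p⟫ + ‖p - y‖ ^ 2 := by
    rw [show u - y = (u - p) - (y - p) by abel, norm_sub_sq_real, ← norm_neg (y - p), neg_sub]
  refine le_of_sq_le_sq ?_ (norm_nonneg _)
  nlinarith [sq_nonneg ‖u - p‖]

theorem norm_smul_add_smul_sub_sq_le {E : Type*} [NormedAddCommGroup E] [NormedSpace ℝ E]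
    {α : ℝ} (hα0 : 0 ≤ α) (hα1 : α ≤ 1) (x w x₀ : E) :
    ‖α • x + (1 - α) • w - x₀‖ ^ 2 ≤ α * ‖x - x₀‖ ^ 2 + (1 - α) * ‖w - x₀‖ ^ 2 := by
  have hconv := (convexOn_univ_norm (E := E)).pow (fun _ _ => norm_nonneg _) 2
  have := hconv.2 (Set.mem_univ (x - x₀)) (Set.mem_univ (w - x₀)) hα0 (sub_nonneg.2 hα1)
    (add_sub_cancel α 1)
  simp only [Pi.pow_apply, smul_eq_mul] at this
  rwa [show α • x + (1 - α) • w - x₀ = α • (x - x₀) + (1 - α) • (w - x₀) by module]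

theorem norm_sub_smul_sub_sq {F : Type*} [NormedAddCommGroup F] [InnerProductSpace ℝ F]
    {g : F} (hg : ‖g‖ = 1) (x x₀ : F) (v : ℝ) :
    ‖x - v • g - x₀‖ ^ 2 = ‖x - x₀‖ ^ 2 - 2 * v * ⟪g, x - x₀⟫ + v ^ 2 := by
  rw [show x - v • g - x₀ = (x - x₀) - v • g by abel, norm_sub_sq_real, real_inner_smul_right,
    norm_smul, hg, real_inner_comm, Real.norm_eq_abs, mul_one, sq_abs]
  ring

theorem stmt_2_general {H : Type*} [NormedAddCommGroup H] [InnerProductSpace ℝ H]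
    (f : H → ℝ) (hcont : Continuous f)
    (fstar : ℝ) (xstar : H) (hfs : f xstar = fstar)
    (T : H → H) (hT : ∀ u v, ‖T u - T v‖ ≤ ‖u - v‖) (hTfix : T xstar = xstar)
    (D : Set H) (hDconv : Convex ℝ D) (hxD : xstar ∈ D)
    (P : H → H) (hP : ∀ z : H, P z ∈ D ∧ ∀ y ∈ D, ‖z - P z‖ ≤ ‖z - y‖)
    (αk vk : ℝ) (hα : αk ∈ Set.Ioc (0:ℝ) 1) (hv : 0 < vk)
    (xk : H) (gk : H)
    (hgk : ∀ y : H, f y < f xk → (inner ℝ gk (y - xk) : ℝ) ≤ 0) (hgnorm : ‖gk‖ = 1)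
    (xk1 : H) (hstep : xk1 = P (αk • xk + (1 - αk) • T (xk - vk • gk)))
    (β L : ℝ) (hβ : 0 < β) (hL : 0 < L)
    (hhold : ∀ z ∈ closure {w : H | f w < f xk}, |f z - fstar| ≤ L * ‖z - xstar‖ ^ β)
    (hlt : fstar < f xk) :
    ‖xk1 - xstar‖ ^ 2 ≤ ‖xk - xstar‖ ^ 2
      - 2 * vk * (1 - αk) * ((f xk - fstar) / L) ^ (1 / β)
      + (1 - αk) * vk ^ 2 := by
  obtain ⟨hα0, hα1⟩ := hα
  subst hfs hstep
  have hgap : 0 < (f xk - f xstar) / L := div_pos (sub_pos.2 hlt) hL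
  have hLr : L * (((f xk - f xstar) / L) ^ (1 / β)) ^ β = f xk - f xstar := by
    rw [one_div, Real.rpow_inv_rpow hgap.le hβ.ne', mul_div_cancel₀ _ hL.ne']
  set r := ((f xk - f xstar) / L) ^ (1 / β)
  have hinner : r ≤ ⟪gk, xk - xstar⟫ :=
    le_inner_sub_of_ball_subset hgnorm (Real.rpow_pos_of_pos hgap _) fun y hy =>
      hgk y (ball_subset_sublevel_of_holder hcont hβ hL hLr.le hhold hy)
  have hTstep : ‖T (xk - vk • gk) - xstar‖ ≤ ‖xk - vk • gk - xstar‖ := by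
    simpa only [hTfix] using hT (xk - vk • gk) xstar
  have hgrad : ‖xk - vk • gk - xstar‖ ^ 2 ≤ ‖xk - xstar‖ ^ 2 - 2 * vk * r + vk ^ 2 := by
    rw [norm_sub_smul_sub_sq hgnorm]
    gcongr
  calc ‖P (αk • xk + (1 - αk) • T (xk - vk • gk)) - xstar‖ ^ 2
      ≤ ‖αk • xk + (1 - αk) • T (xk - vk • gk) - xstar‖ ^ 2 := by
        gcongr
        exact norm_sub_le_of_isNearest hDconv (hP _).1 (hP _).2 hxD
    _ ≤ αk * ‖xk - xstar‖ ^ 2 + (1 - αk) * ‖T (xk - vk • gk) - xstar‖ ^ 2 :=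
        norm_smul_add_smul_sub_sq_le hα0.le hα1 _ _ _
    _ ≤ αk * ‖xk - xstar‖ ^ 2 + (1 - αk) * (‖xk - xstar‖ ^ 2 - 2 * vk * r + vk ^ 2) := by
        gcongr
        exact (pow_le_pow_left₀ (norm_nonneg _) hTstep 2).trans hgrad
    _ = _ := by ring

/-- Lemma (per-step inequality) for the fixed point quasiconvex subgradient method. -/
theorem stmt_2 {H : Type*} [NormedAddCommGroup H] [InnerProductSpace ℝ H]
    (f : H → ℝ) (hcont : Continuous f)
    (hqc : ∀ u v : H, ∀ α : ℝ, α ∈ Set.Icc (0:ℝ) 1 →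
      f ((1 - α) • u + α • v) ≤ max (f u) (f v))
    (fstar : ℝ) (xstar : H) (hfs : f xstar = fstar)
    (T : H → H) (hT : ∀ u v, ‖T u - T v‖ ≤ ‖u - v‖) (hTfix : T xstar = xstar)
    (D : Set H) (hDc : IsClosed D) (hDconv : Convex ℝ D) (hxD : xstar ∈ D)
    (P : H → H) (hP : ∀ z : H, P z ∈ D ∧ ∀ y ∈ D, ‖z - P z‖ ≤ ‖z - y‖)
    (αk vk : ℝ) (hα : αk ∈ Set.Ioc (0:ℝ) 1) (hv : 0 < vk)
    (xk : H) (gk : H)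
    (hgk : ∀ y : H, f y < f xk → (inner ℝ gk (y - xk) : ℝ) ≤ 0) (hgnorm : ‖gk‖ = 1)
    (xk1 : H) (hstep : xk1 = P (αk • xk + (1 - αk) • T (xk - vk • gk)))
    (β L : ℝ) (hβ : 0 < β) (hL : 0 < L)
    (hhold : ∀ z ∈ closure {w : H | f w < f xk}, |f z - fstar| ≤ L * ‖z - xstar‖ ^ β)
    (hlt : fstar < f xk) :
    ‖xk1 - xstar‖ ^ 2 ≤ ‖xk - xstar‖ ^ 2
      - 2 * vk * (1 - αk) * ((f xk - fstar) / L) ^ (1 / β)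
      + (1 - αk) * vk ^ 2 :=
  stmt_2_general f hcont fstar xstar hfs T hT hTfix D hDconv hxD P hP αk vk hα hv xk gk hgk hgnorm
    xk1 hstep β L hβ hL hhold hlt
end

section
/- Let H be a real Hilbert space, T : H → H firmly nonexpansive, D ⊆ H nonempty closed convex, x ∈ Fix(T) ∩ D, and let x_{k+1} := P_D(α_k x_k + (1 − α_k) T(x_k − v_k g_k)) with α_k ∈ (0,1], ‖g_k‖ = 1, and the sequences {x_k} and {v_k} bounded. Then there exists M₁ ≥ 0 such that for all k, ‖x_{k+1} − x‖² ≤ ‖x_k − x‖² − (1 − α_k)‖x_k − T(x_k − v_k g_k)‖² + v_k M₁. -/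
open RealInnerProductSpace

lemma proj_quasi_le {H : Type*} [NormedAddCommGroup H] [InnerProductSpace ℝ H]
    {D : Set H} (hDconv : Convex ℝ D) {P : H → H}
    (hP : ∀ z : H, P z ∈ D ∧ ∀ y ∈ D, ‖z - P z‖ ≤ ‖z - y‖)
    {xf : H} (hxfD : xf ∈ D) (z : H) : ‖P z - xf‖ ≤ ‖z - xf‖ := by
  set p := P z with hp
  have hpD : p ∈ D := (hP z).1
  have key : ∀ t : ℝ, 0 < t → t ≤ 1 → 2 * ⟪z - p, xf - p⟫ ≤ t * ‖xf - p‖ ^ 2 := by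
    intro t ht ht1
    have hmem : (1 - t) • p + t • xf ∈ D :=
      hDconv hpD hxfD (by linarith) (le_of_lt ht) (by ring)
    have h1 := (hP z).2 _ hmem
    have h2 : ‖z - p‖ ^ 2 ≤ ‖z - ((1 - t) • p + t • xf)‖ ^ 2 :=
      pow_le_pow_left₀ (norm_nonneg _) h1 2
    have h3 : z - ((1 - t) • p + t • xf) = (z - p) - t • (xf - p) := by
      module
    have hexp : ‖(z - p) - t • (xf - p)‖ ^ 2
        = ‖z - p‖ ^ 2 - 2 * (t * ⟪z - p, xf - p⟫) + t ^ 2 * ‖xf - p‖ ^ 2 := by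
      rw [norm_sub_sq_real, real_inner_smul_right, norm_smul, Real.norm_eq_abs,
        abs_of_pos ht, mul_pow]
    rw [h3, hexp] at h2
    nlinarith [sq_nonneg t]
  have hin : ⟪z - p, xf - p⟫ ≤ 0 := by
    by_contra h
    push_neg at h
    rcases le_or_gt (‖xf - p‖ ^ 2) 0 with hB | hB
    · have := key 1 one_pos le_rfl; nlinarith
    · have ht : 0 < min 1 (⟪z - p, xf - p⟫ / ‖xf - p‖ ^ 2) :=
        lt_min one_pos (div_pos h hB)
      have hk := key _ ht (min_le_left _ _)
      have h2 : min 1 (⟪z - p, xf - p⟫ / ‖xf - p‖ ^ 2) * ‖xf - p‖ ^ 2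
          ≤ ⟪z - p, xf - p⟫ := by
        calc min 1 (⟪z - p, xf - p⟫ / ‖xf - p‖ ^ 2) * ‖xf - p‖ ^ 2
            ≤ (⟪z - p, xf - p⟫ / ‖xf - p‖ ^ 2) * ‖xf - p‖ ^ 2 :=
              mul_le_mul_of_nonneg_right (min_le_right _ _) (le_of_lt hB)
          _ = ⟪z - p, xf - p⟫ := div_mul_cancel₀ _ (ne_of_gt hB)
      nlinarith
  have hzx : z - xf = (z - p) - (xf - p) := by abel
  have h4 : ‖p - xf‖ ^ 2 ≤ ‖z - xf‖ ^ 2 := by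
    have hexp : ‖(z - p) - (xf - p)‖ ^ 2
        = ‖z - p‖ ^ 2 - 2 * ⟪z - p, xf - p⟫ + ‖xf - p‖ ^ 2 :=
      norm_sub_sq_real (z - p) (xf - p)
    rw [norm_sub_rev p xf, hzx, hexp]
    nlinarith [sq_nonneg ‖z - p‖]
  nlinarith [norm_nonneg (p - xf), norm_nonneg (z - xf)]

set_option maxHeartbeats 1000000 in
/-- Lemma (distance-decrease) for the fixed point quasiconvex subgradient method. -/
theorem stmt_3 {H : Type*} [NormedAddCommGroup H] [InnerProductSpace ℝ H]
    (T : H → H)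
    (hT : ∀ u v : H, ‖T u - T v‖ ^ 2 + ‖(u - T u) - (v - T v)‖ ^ 2 ≤ ‖u - v‖ ^ 2)
    (D : Set H) (hDne : D.Nonempty) (hDc : IsClosed D) (hDconv : Convex ℝ D)
    (P : H → H) (hP : ∀ z : H, P z ∈ D ∧ ∀ y ∈ D, ‖z - P z‖ ≤ ‖z - y‖)
    (x : ℕ → H) (g : ℕ → H) (α v : ℕ → ℝ)
    (hα : ∀ k, α k ∈ Set.Ioc (0:ℝ) 1) (hv : ∀ k, 0 < v k)
    (hgnorm : ∀ k, ‖g k‖ = 1)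
    (hstep : ∀ k, x (k + 1) = P (α k • x k + (1 - α k) • T (x k - v k • g k)))
    (hxbdd : ∃ M₂ : ℝ, ∀ k, ‖x k‖ ≤ M₂) (hvbdd : ∃ M₃ : ℝ, ∀ k, v k ≤ M₃)
    (xf : H) (hxf : T xf = xf) (hxfD : xf ∈ D) :
    ∃ M₁ : ℝ, 0 ≤ M₁ ∧ ∀ k,
      ‖x (k + 1) - xf‖ ^ 2 ≤ ‖x k - xf‖ ^ 2
        - (1 - α k) * ‖x k - T (x k - v k • g k)‖ ^ 2 + v k * M₁ := by
  obtain ⟨M₂, hM₂⟩ := hxbdd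
  obtain ⟨M₃, hM₃⟩ := hvbdd
  have hM₂0 : 0 ≤ M₂ := le_trans (norm_nonneg _) (hM₂ 0)
  have hM₃0 : 0 ≤ M₃ := le_of_lt (lt_of_lt_of_le (hv 0) (hM₃ 0))
  refine ⟨2 * (M₂ + M₃ + ‖xf‖), by positivity, fun k => ?_⟩
  obtain ⟨hα0, hα1⟩ := hα k
  have hβ0 : (0:ℝ) ≤ 1 - α k := by linarith
  have hvk := hv k
  set w : H := v k • g k with hw
  set y : H := T (x k - w) with hy
  have hwn : ‖w‖ = v k := by
    rw [hw, norm_smul, hgnorm, Real.norm_eq_abs, abs_of_pos hvk, mul_one]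
  -- firm nonexpansiveness at (x k - w, xf)
  have hfirm := hT (x k - w) xf
  rw [hxf] at hfirm
  have hfe : (x k - w - y) - (xf - xf) = (x k - w) - y := by abel
  rw [hfe] at hfirm
  -- bound on ‖y - xf‖
  have hC1 : ‖y - xf‖ ≤ ‖(x k - w) - xf‖ := by
    have h2 : ‖y - xf‖ ^ 2 ≤ ‖(x k - w) - xf‖ ^ 2 := by
      nlinarith [sq_nonneg ‖(x k - w) - y‖]
    nlinarith [norm_nonneg (y - xf), norm_nonneg ((x k - w) - xf)]
  have hC2 : ‖y - xf‖ ≤ M₂ + M₃ + ‖xf‖ := by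
    calc ‖y - xf‖ ≤ ‖(x k - w) - xf‖ := hC1
      _ ≤ ‖x k - w‖ + ‖xf‖ := norm_sub_le _ _
      _ ≤ ‖x k‖ + ‖w‖ + ‖xf‖ := by linarith [norm_sub_le (x k) w]
      _ ≤ M₂ + M₃ + ‖xf‖ := by
          have := hM₂ k; have := hM₃ k; rw [hwn]; linarith
  -- projection step
  have hproj : ‖x (k + 1) - xf‖ ≤ ‖(α k • x k + (1 - α k) • y) - xf‖ := by
    rw [hstep k]
    exact proj_quasi_le hDconv hP hxfD _
  have hprojsq : ‖x (k + 1) - xf‖ ^ 2 ≤ ‖(α k • x k + (1 - α k) • y) - xf‖ ^ 2 :=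
    pow_le_pow_left₀ (norm_nonneg _) hproj 2
  -- convex combination identity
  have hcombeq : (α k • x k + (1 - α k) • y) - xf
      = α k • (x k - xf) + (1 - α k) • (y - xf) := by
    module
  have he1 : ‖(α k • x k + (1 - α k) • y) - xf‖ ^ 2
      = (α k) ^ 2 * ‖x k - xf‖ ^ 2
        + 2 * (α k * (1 - α k)) * ⟪x k - xf, y - xf⟫
        + (1 - α k) ^ 2 * ‖y - xf‖ ^ 2 := by
    rw [hcombeq, norm_add_sq_real, real_inner_smul_left, real_inner_smul_right,
      norm_smul, norm_smul, mul_pow, mul_pow, Real.norm_eq_abs, Real.norm_eq_abs,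
      sq_abs, sq_abs]
    ring
  have he2 : ‖x k - y‖ ^ 2
      = ‖x k - xf‖ ^ 2 - 2 * ⟪x k - xf, y - xf⟫ + ‖y - xf‖ ^ 2 := by
    have h : x k - y = (x k - xf) - (y - xf) := by abel
    rw [h, norm_sub_sq_real]
  have he3 : ‖(x k - w) - xf‖ ^ 2
      = ‖x k - xf‖ ^ 2 - 2 * (v k * ⟪x k - xf, g k⟫) + (v k) ^ 2 := by
    have h : (x k - w) - xf = (x k - xf) - w := by abel
    rw [h, norm_sub_sq_real, hw, real_inner_smul_right, ← hw, hwn]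
  have he4 : ‖(x k - w) - y‖ ^ 2
      = ‖x k - y‖ ^ 2 - 2 * (v k * ⟪x k - y, g k⟫) + (v k) ^ 2 := by
    have h : (x k - w) - y = (x k - y) - w := by abel
    rw [h, norm_sub_sq_real, hw, real_inner_smul_right, ← hw, hwn]
  have hinn : ⟪x k - y, g k⟫ - ⟪x k - xf, g k⟫ = ⟪xf - y, g k⟫ := by
    rw [← inner_sub_left]
    congr 1
    abel
  have hCS : |⟪xf - y, g k⟫| ≤ ‖y - xf‖ := by
    calc |⟪xf - y, g k⟫| ≤ ‖xf - y‖ * ‖g k‖ := abs_real_inner_le_norm _ _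
      _ = ‖y - xf‖ := by rw [hgnorm, mul_one, norm_sub_rev]
  have habs := abs_le.mp hCS
  -- C² ≤ A² - Q² + 2 v ⟪xf - y, g⟫
  have hCfin : ‖y - xf‖ ^ 2 ≤ ‖x k - xf‖ ^ 2 - ‖x k - y‖ ^ 2
      + 2 * v k * ⟪xf - y, g k⟫ := by
    rw [he3, he4] at hfirm
    nlinarith [hfirm]
  have hB0 : (0:ℝ) ≤ M₂ + M₃ + ‖xf‖ := by positivity
  -- step 1: S ≤ α A² + (1-α) C² - α(1-α) Q²
  have h2I : 2 * ⟪x k - xf, y - xf⟫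
      = ‖x k - xf‖ ^ 2 + ‖y - xf‖ ^ 2 - ‖x k - y‖ ^ 2 := by linarith [he2]
  have hid : (α k) ^ 2 * ‖x k - xf‖ ^ 2
        + 2 * (α k * (1 - α k)) * ⟪x k - xf, y - xf⟫
        + (1 - α k) ^ 2 * ‖y - xf‖ ^ 2
      = α k * ‖x k - xf‖ ^ 2 + (1 - α k) * ‖y - xf‖ ^ 2
        - (α k * (1 - α k)) * ‖x k - y‖ ^ 2 := by
    linear_combination (α k * (1 - α k)) * h2I
  have hstep1 : ‖x (k + 1) - xf‖ ^ 2
      ≤ α k * ‖x k - xf‖ ^ 2 + (1 - α k) * ‖y - xf‖ ^ 2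
        - (α k * (1 - α k)) * ‖x k - y‖ ^ 2 := by
    rw [he1, hid] at hprojsq; exact hprojsq
  -- step 2: multiply hCfin by (1-α)
  have hstep2 : (1 - α k) * ‖y - xf‖ ^ 2
      ≤ (1 - α k) * (‖x k - xf‖ ^ 2 - ‖x k - y‖ ^ 2 + 2 * v k * ⟪xf - y, g k⟫) :=
    mul_le_mul_of_nonneg_left hCfin hβ0
  -- step 3: (1-α) * 2v⟪xf-y,g⟫ ≤ v * M₁
  have hJle : ⟪xf - y, g k⟫ ≤ M₂ + M₃ + ‖xf‖ := le_trans habs.2 hC2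
  -- abstract to real variables
  set A2 : ℝ := ‖x k - xf‖ ^ 2 with hA2
  set C2 : ℝ := ‖y - xf‖ ^ 2 with hC2'
  set Q2 : ℝ := ‖x k - y‖ ^ 2 with hQ2
  set J : ℝ := ⟪xf - y, g k⟫ with hJ
  set B : ℝ := M₂ + M₃ + ‖xf‖ with hB
  have hQ2nn : 0 ≤ Q2 := sq_nonneg _
  have hstep3 : (1 - α k) * (2 * v k * J) ≤ v k * (2 * B) := by
    have h2 : 2 * v k * J ≤ 2 * v k * B := by nlinarith
    have h3 : (1 - α k) * (2 * v k * J) ≤ (1 - α k) * (2 * v k * B) :=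
      mul_le_mul_of_nonneg_left h2 hβ0
    nlinarith [mul_nonneg hvk.le hB0, mul_nonneg hα0.le (mul_nonneg hvk.le hB0)]
  have hq : 0 ≤ (α k * (1 - α k)) * Q2 :=
    mul_nonneg (mul_nonneg hα0.le hβ0) hQ2nn
  nlinarith [hstep1, hstep2, hstep3, hq]
end

section
/- Let f(x) := min{‖x‖, α} on a real Hilbert space H for some α > 0, let {v_k} ⊂ (0, α], and define x_{k+1} := x_k − (v_k/2)·(x_k/‖x_k‖) (while x_k ≠ 0). Then the sequence {‖x_k‖} is bounded above by max{‖x₁‖, (√5/2)·α}. -/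
/-- The sequence generated by the subgradient method on f(x) = min{‖x‖, α}
with step-sizes in (0, α] is bounded by max{‖x₁‖, (√5/2)·α}. -/
theorem stmt_12 {H : Type*} [NormedAddCommGroup H] [InnerProductSpace ℝ H]
    (α : ℝ) (hα : 0 < α) (v : ℕ → ℝ) (hv : ∀ k, v k ∈ Set.Ioc (0:ℝ) α)
    (x : ℕ → H) (hnz : ∀ k, 1 ≤ k → x k ≠ 0)
    (hstep : ∀ k, 1 ≤ k → x (k + 1) = x k - (v k / 2) • (‖x k‖⁻¹ • x k)) :
    ∀ k, 1 ≤ k → ‖x k‖ ≤ max ‖x 1‖ (Real.sqrt 5 / 2 * α) := by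
  have hs5 : (1:ℝ) ≤ Real.sqrt 5 := by
    rw [show (1:ℝ) = Real.sqrt 1 by simp]
    exact Real.sqrt_le_sqrt (by norm_num)
  intro k hk
  induction k with
  | zero => omega
  | succ n ih =>
    rcases Nat.lt_or_ge 1 (n + 1) with h1 | h1
    · have hn1 : 1 ≤ n := by omega
      have ihn := ih hn1
      have hr : (0:ℝ) < ‖x n‖ := norm_pos_iff.mpr (hnz n hn1)
      set r := ‖x n‖ with hrdef
      have hx : x (n + 1) = (1 - v n / 2 * r⁻¹) • x n := by
        rw [hstep n hn1, smul_smul, sub_smul, one_smul]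
      have key : (1 - v n / 2 * r⁻¹) * r = r - v n / 2 := by
        field_simp
      have hnorm : ‖x (n + 1)‖ = |r - v n / 2| := by
        rw [hx, norm_smul, Real.norm_eq_abs, ← hrdef, ← key, abs_mul, abs_of_pos hr]
      rw [hnorm]
      have hv0 := (hv n).1
      have hvα := (hv n).2
      rcases abs_cases (r - v n / 2) with ⟨heq, _⟩ | ⟨heq, _⟩
      · rw [heq]
        have : r - v n / 2 ≤ r := by linarith
        exact le_trans this ihn
      · rw [heq]
        have : -(r - v n / 2) ≤ Real.sqrt 5 / 2 * α := by nlinarith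
        exact le_trans this (le_max_right _ _)
    · have : n + 1 = 1 := by omega
      rw [this]
      exact le_max_left _ _
end

section
/- Let f : H → ℝ be continuous quasiconvex and coercive (f(x) → ∞ as ‖x‖ → ∞) on a real Hilbert space, and suppose f satisfies the Hölder condition with degree β and constant L at a minimizer x⋆ on all of H. Then the sequence generated by x_{k+1} := P_D(α_k x_k + (1 − α_k) T(x_k − v_k g_k)) — with T nonexpansive fixing x⋆, P_D the projection onto a closed convex set D containing x⋆, α_k ∈ (0,1], ‖g_k‖ = 1, g_k ∈ ∂⋆f(x_k), and v_k < 1 for all sufficiently large k — is bounded. -/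
/-!
Let `B - 1` bound `‖z - x⋆‖` on the set `{f < f x⋆ + L}`, bounded by coercivity. From the index
`k₀` on which `v k < 1`, the point `x k - v k • g k` stays within `max ‖x k - x⋆‖ B` of `x⋆`:
either `x k` lies in that set and the step is shorter than `1`, or
`f (x k) ≥ f x⋆ + L > f (x⋆ + v k • g k)` by the Hölder condition, and then `g k ∈ ∂⋆f(x k)`
gives `⟪g k, x k - x⋆⟫ ≥ v k`, so the step does not move away from `x⋆`. Averaging with `T` and
projecting onto `D` preserve closed balls about `x⋆`, so `‖x k - x⋆‖ ≤ max ‖x k₀ - x⋆‖ B` for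
all `k ≥ k₀`.
-/

open Metric

section InnerProductSpace

variable {H : Type*} [NormedAddCommGroup H] [InnerProductSpace ℝ H]

/-- `g ∈ ∂⋆f(x)` in the paper's notation. -/
def IsQuasiSubgradient (f : H → ℝ) (x g : H) : Prop :=
  ∀ y, f y < f x → inner ℝ g (y - x) ≤ 0

theorem norm_sub_le_of_forall_norm_sub_le {D : Set H} (hD : Convex ℝ D) {z p y : H}
    (hp : p ∈ D) (hmin : ∀ w ∈ D, ‖z - p‖ ≤ ‖z - w‖) (hy : y ∈ D) : ‖p - y‖ ≤ ‖z - y‖ := by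
  have : Nonempty D := ⟨⟨p, hp⟩⟩
  have hinf : ‖z - p‖ = ⨅ w : D, ‖z - w‖ :=
    le_antisymm (le_ciInf fun w => hmin w w.2)
      (ciInf_le (f := fun w : D => ‖z - w‖)
        ⟨0, by rintro _ ⟨w, rfl⟩; exact norm_nonneg _⟩ ⟨p, hp⟩)
  have hvar : inner ℝ (z - p) (y - p) ≤ 0 :=
    (norm_eq_iInf_iff_real_inner_le_zero hD hp).1 hinf y hy
  have hexpand : ‖z - y‖ ^ 2 = ‖z - p‖ ^ 2 - 2 * inner ℝ (z - p) (y - p) + ‖p - y‖ ^ 2 := by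
    rw [show z - y = (z - p) - (y - p) by abel, norm_sub_sq_real, norm_sub_rev y p]
  refine (pow_le_pow_iff_left₀ (norm_nonneg _) (norm_nonneg _) two_ne_zero).1 ?_
  nlinarith [sq_nonneg ‖z - p‖]

theorem norm_sub_smul_le_norm {d g : H} {v : ℝ} (hv : 0 ≤ v)
    (h : v * ‖g‖ ^ 2 ≤ 2 * inner ℝ g d) : ‖d - v • g‖ ≤ ‖d‖ := by
  have hexpand : ‖d - v • g‖ ^ 2 = ‖d‖ ^ 2 - v * (2 * inner ℝ g d - v * ‖g‖ ^ 2) := by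
    rw [norm_sub_sq_real, real_inner_smul_right, norm_smul, Real.norm_of_nonneg hv,
      real_inner_comm]
    ring
  refine (pow_le_pow_iff_left₀ (norm_nonneg _) (norm_nonneg _) two_ne_zero).1 ?_
  nlinarith [mul_nonneg hv (sub_nonneg.2 h)]

theorem IsQuasiSubgradient.norm_sub_smul_sub_le {f : H → ℝ} {x g y : H} {v : ℝ}
    (hg : IsQuasiSubgradient f x g) (hv : 0 ≤ v) (hy : f (y + v • g) < f x) :
    ‖x - v • g - y‖ ≤ ‖x - y‖ := by
  have hnormal := hg _ hy
  rw [show y + v • g - x = v • g - (x - y) by abel, inner_sub_right, real_inner_smul_right,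
    real_inner_self_eq_norm_sq] at hnormal
  rw [show x - v • g - y = (x - y) - v • g by abel]
  refine norm_sub_smul_le_norm hv ?_
  nlinarith [mul_nonneg hv (sq_nonneg ‖g‖)]

theorem proj_average_mem_closedBall {D : Set H} (hD : Convex ℝ D) {P T : H → H}
    (hP : ∀ z, P z ∈ D ∧ ∀ y ∈ D, ‖z - P z‖ ≤ ‖z - y‖) (hT : ∀ u w, ‖T u - T w‖ ≤ ‖u - w‖)
    {x₀ : H} (hx₀T : T x₀ = x₀) (hx₀D : x₀ ∈ D) {a : ℝ} (ha : a ∈ Set.Icc (0 : ℝ) 1)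
    {x y : H} {r : ℝ} (hx : x ∈ closedBall x₀ r) (hy : y ∈ closedBall x₀ r) :
    P (a • x + (1 - a) • T y) ∈ closedBall x₀ r := by
  have hTy : T y ∈ closedBall x₀ r := by
    rw [mem_closedBall_iff_norm] at hy ⊢
    calc ‖T y - x₀‖ = ‖T y - T x₀‖ := by rw [hx₀T]
      _ ≤ r := (hT y x₀).trans hy
  have hmid := convex_closedBall x₀ r hx hTy ha.1 (sub_nonneg.2 ha.2) (add_sub_cancel a 1)
  rw [mem_closedBall_iff_norm] at hmid ⊢
  exact (norm_sub_le_of_forall_norm_sub_le hD (hP _).1 (hP _).2 hx₀D).trans hmid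

end InnerProductSpace

theorem lt_add_of_abs_sub_le_mul_rpow {E : Type*} [SeminormedAddCommGroup E] {f : E → ℝ}
    {x₀ z : E} {β L : ℝ} (hβ : 0 < β) (hL : 0 < L)
    (hhold : |f z - f x₀| ≤ L * ‖z - x₀‖ ^ β) (hz : ‖z - x₀‖ < 1) : f z < f x₀ + L := by
  have hpow : ‖z - x₀‖ ^ β < 1 := Real.rpow_lt_one (norm_nonneg _) hz hβ
  linarith [(abs_le.1 hhold).2, mul_lt_mul_of_pos_left hpow hL]

theorem bddAbove_range_of_le_max {α : Type*} [LinearOrder α] {u : ℕ → α} {k₀ : ℕ} {C : α}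
    (h : ∀ k ≥ k₀, u (k + 1) ≤ max (u k) C) : BddAbove (Set.range u) := by
  have : Nonempty α := ⟨C⟩
  have htail : ∀ k ≥ k₀, u k ≤ max (u k₀) C :=
    Nat.le_induction (le_max_left _ _) fun k hk ih =>
      (h k hk).trans (max_le ih (le_max_right _ _))
  refine (((Set.finite_Iio k₀).image u).bddAbove.union
    (bddAbove_Iic (a := max (u k₀) C))).mono ?_
  rintro _ ⟨k, rfl⟩
  rcases lt_or_ge k k₀ with hk | hk
  · exact Or.inl ⟨k, hk, rfl⟩
  · exact Or.inr (htail k hk)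

theorem stmt_16_general {H : Type*} [NormedAddCommGroup H] [InnerProductSpace ℝ H]
    (f : H → ℝ)
    (hcoercive : ∀ c : ℝ, ∃ R : ℝ, ∀ z : H, R ≤ ‖z‖ → c ≤ f z)
    (T : H → H) (hT : ∀ u w : H, ‖T u - T w‖ ≤ ‖u - w‖)
    (D : Set H) (hDconv : Convex ℝ D)
    (P : H → H) (hP : ∀ z : H, P z ∈ D ∧ ∀ y ∈ D, ‖z - P z‖ ≤ ‖z - y‖)
    (xstar : H) (hxsT : T xstar = xstar) (hxsD : xstar ∈ D)
    (β L : ℝ) (hβ : 0 < β) (hL : 0 < L)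
    (hhold : ∀ z : H, |f z - f xstar| ≤ L * ‖z - xstar‖ ^ β)
    (v : ℕ → ℝ) (hv : ∀ k, 0 < v k) (hv1 : ∃ k₀ : ℕ, ∀ k ≥ k₀, v k < 1)
    (x : ℕ → H) (g : ℕ → H) (α : ℕ → ℝ)
    (hα : ∀ k, α k ∈ Set.Ioc (0:ℝ) 1)
    (hgk : ∀ k, ∀ y : H, f y < f (x k) → (inner ℝ (g k) (y - x k) : ℝ) ≤ 0)
    (hgnorm : ∀ k, ‖g k‖ = 1)
    (hstep : ∀ k, x (k + 1) = P (α k • x k + (1 - α k) • T (x k - v k • g k))) :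
    ∃ M : ℝ, ∀ k, ‖x k‖ ≤ M := by
  obtain ⟨k₀, hk₀⟩ := hv1
  obtain ⟨R, hR⟩ := hcoercive (f xstar + L)
  set B := R + ‖xstar‖ + 1 with hB
  have hnorm_step : ∀ k, ‖v k • g k‖ = v k := fun k => by
    rw [norm_smul, hgnorm, mul_one, Real.norm_of_nonneg (hv k).le]
  have hinner : ∀ k ≥ k₀, x k - v k • g k ∈ closedBall xstar (max ‖x k - xstar‖ B) := by
    intro k hk
    rw [mem_closedBall_iff_norm]
    rcases lt_or_ge (f (x k)) (f xstar + L) with hlow | hhigh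
    · have hxk : ‖x k‖ < R := not_le.1 fun h => (hR _ h).not_gt hlow
      refine le_max_of_le_right ?_
      linarith [norm_sub_le (x k - v k • g k) xstar, norm_sub_le (x k) (v k • g k),
        hnorm_step k, hk₀ k hk]
    · have hdescent : f (xstar + v k • g k) < f (x k) := by
        refine (lt_add_of_abs_sub_le_mul_rpow hβ hL (hhold _) ?_).trans_le hhigh
        rw [add_sub_cancel_left, hnorm_step]
        exact hk₀ k hk
      exact (IsQuasiSubgradient.norm_sub_smul_sub_le (hgk k) (hv k).le hdescent).trans
        (le_max_left _ _)
  have hdist : ∀ k ≥ k₀, ‖x (k + 1) - xstar‖ ≤ max ‖x k - xstar‖ B := by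
    intro k hk
    have hx : x k ∈ closedBall xstar (max ‖x k - xstar‖ B) :=
      mem_closedBall_iff_norm.2 (le_max_left _ _)
    have := proj_average_mem_closedBall hDconv hP hT hxsT hxsD
      (Set.Ioc_subset_Icc_self (hα k)) hx (hinner k hk)
    rwa [← hstep, mem_closedBall_iff_norm] at this
  obtain ⟨M, hM⟩ := bddAbove_range_of_le_max (u := fun k => ‖x k - xstar‖) hdist
  exact ⟨‖xstar‖ + M, fun k => by linarith [norm_le_insert' (x k) xstar, hM ⟨k, rfl⟩]⟩

/-- Coercivity of the objective ensures boundedness of the generated sequence. -/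
theorem stmt_16 {H : Type*} [NormedAddCommGroup H] [InnerProductSpace ℝ H]
    (f : H → ℝ) (hcont : Continuous f)
    (hqc : ∀ u w : H, ∀ t : ℝ, t ∈ Set.Icc (0:ℝ) 1 →
      f ((1 - t) • u + t • w) ≤ max (f u) (f w))
    (hcoercive : ∀ c : ℝ, ∃ R : ℝ, ∀ z : H, R ≤ ‖z‖ → c ≤ f z)
    (T : H → H) (hT : ∀ u w : H, ‖T u - T w‖ ≤ ‖u - w‖)
    (D : Set H) (hDc : IsClosed D) (hDconv : Convex ℝ D)
    (P : H → H) (hP : ∀ z : H, P z ∈ D ∧ ∀ y ∈ D, ‖z - P z‖ ≤ ‖z - y‖)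
    (xstar : H) (hxsT : T xstar = xstar) (hxsD : xstar ∈ D)
    (hmin : ∀ y : H, T y = y → y ∈ D → f xstar ≤ f y)
    (β L : ℝ) (hβ : 0 < β) (hL : 0 < L)
    (hhold : ∀ z : H, |f z - f xstar| ≤ L * ‖z - xstar‖ ^ β)
    (v : ℕ → ℝ) (hv : ∀ k, 0 < v k) (hv1 : ∃ k₀ : ℕ, ∀ k ≥ k₀, v k < 1)
    (x : ℕ → H) (g : ℕ → H) (α : ℕ → ℝ)
    (hα : ∀ k, α k ∈ Set.Ioc (0:ℝ) 1)
    (hgk : ∀ k, ∀ y : H, f y < f (x k) → (inner ℝ (g k) (y - x k) : ℝ) ≤ 0)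
    (hgnorm : ∀ k, ‖g k‖ = 1)
    (hstep : ∀ k, x (k + 1) = P (α k • x k + (1 - α k) • T (x k - v k • g k))) :
    ∃ M : ℝ, ∀ k, ‖x k‖ ≤ M :=
  stmt_16_general f hcoercive T hT D hDconv P hP xstar hxsT hxsD β L hβ hL hhold v hv hv1 x g α hα
    hgk hgnorm hstep
end
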